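/- Let μ* ∈ ℝ^d minimize the Behrens–Fisher objective F(μ) = (N_1/2) log(1 + M_X(μ)) + (N_2/2) log(1 + M_Y(μ)) over μ ∈ ℝ^d. Then M_X(μ*) ≤ M_X(Ȳ) and M_Y(μ*) ≤ M_Y(X̄); equivalently, the point (u_1*, u_2*) = (1 + M_X(μ*), 1 + M_Y(μ*)) satisfies 1 ≤ u_1* ≤ 1 + M_X(Ȳ) and 1 ≤ u_2* ≤ 1 + M_Y(X̄). -/

import Mathlib

/-! At `μ = Ȳ` the second Mahalanobis term vanishes, so comparing `F μ* ≤ F Ȳ` and dropping the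
nonnegative term `(N₂/2) log (1 + M_Y μ*)` gives `log (1 + M_X μ*) ≤ log (1 + M_X Ȳ)`; symmetrically
at `μ = X̄`. -/

open Matrix Real

theorem Matrix.PosDef.dotProduct_inv_mulVec_nonneg {n : Type*} [Fintype n] [DecidableEq n]
    {S : Matrix n n ℝ} (hS : S.PosDef) (v : n → ℝ) : 0 ≤ v ⬝ᵥ (S⁻¹ *ᵥ v) := by
  simpa using hS.inv.posSemidef.dotProduct_mulVec_nonneg v

theorem le_of_weighted_log_one_add_le {α : Type*} {f g : α → ℝ} {a b : ℝ} (ha : 0 < a)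
    (hb : 0 ≤ b) {x y : α} (hfx : 0 ≤ f x) (hfy : 0 ≤ f y) (hgx : 0 ≤ g x) (hgy : g y = 0)
    (h : a * log (1 + f x) + b * log (1 + g x) ≤ a * log (1 + f y) + b * log (1 + g y)) :
    f x ≤ f y := by
  have hgx_log : 0 ≤ b * log (1 + g x) := mul_nonneg hb (log_nonneg (by linarith))
  rw [hgy, add_zero, log_one, mul_zero, add_zero] at h
  have hlog : log (1 + f x) ≤ log (1 + f y) := le_of_mul_le_mul_left (by linarith) ha
  linarith [(log_le_log_iff (by linarith) (by linarith)).1 hlog]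

theorem stmt6_general (d : ℕ)
    (S₁ S₂ : Matrix (Fin d) (Fin d) ℝ) (hS₁ : S₁.PosDef) (hS₂ : S₂.PosDef)
    (Xbar Ybar : Fin d → ℝ) (N₁ N₂ : ℝ) (hN₁ : 0 < N₁) (hN₂ : 0 < N₂)
    (Mx My F : (Fin d → ℝ) → ℝ)
    (hMx : Mx = fun μ => (Xbar - μ) ⬝ᵥ (S₁⁻¹ *ᵥ (Xbar - μ)))
    (hMy : My = fun μ => (Ybar - μ) ⬝ᵥ (S₂⁻¹ *ᵥ (Ybar - μ)))
    (hF : F = fun μ => (N₁/2) * Real.log (1 + Mx μ) + (N₂/2) * Real.log (1 + My μ))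
    (μstar : Fin d → ℝ) (hmin : ∀ μ : Fin d → ℝ, F μstar ≤ F μ) :
    (Mx μstar ≤ Mx Ybar ∧ My μstar ≤ My Xbar) ∧
    (1 ≤ 1 + Mx μstar ∧ 1 + Mx μstar ≤ 1 + Mx Ybar) ∧
    (1 ≤ 1 + My μstar ∧ 1 + My μstar ≤ 1 + My Xbar) := by
  subst hF
  beta_reduce at hmin
  have hMx0 (μ) : 0 ≤ Mx μ := hMx ▸ hS₁.dotProduct_inv_mulVec_nonneg (Xbar - μ)
  have hMy0 (μ) : 0 ≤ My μ := hMy ▸ hS₂.dotProduct_inv_mulVec_nonneg (Ybar - μ)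
  have hMxX : Mx Xbar = 0 := by simp [hMx]
  have hMyY : My Ybar = 0 := by simp [hMy]
  have hx : Mx μstar ≤ Mx Ybar :=
    le_of_weighted_log_one_add_le (by linarith) (by linarith) (hMx0 _) (hMx0 _) (hMy0 _) hMyY
      (hmin Ybar)
  have hy : My μstar ≤ My Xbar :=
    le_of_weighted_log_one_add_le (by linarith) (by linarith) (hMy0 _) (hMy0 _) (hMx0 _) hMxX
      ((add_comm _ _).trans_le ((hmin Xbar).trans_eq (add_comm _ _)))
  exact ⟨⟨hx, hy⟩, ⟨by linarith [hMx0 μstar], by linarith⟩, ⟨by linarith [hMy0 μstar], by linarith⟩⟩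

theorem stmt6 (d : ℕ) (hd : 1 ≤ d)
    (S₁ S₂ : Matrix (Fin d) (Fin d) ℝ) (hS₁ : S₁.PosDef) (hS₂ : S₂.PosDef)
    (Xbar Ybar : Fin d → ℝ) (N₁ N₂ : ℝ) (hN₁ : 0 < N₁) (hN₂ : 0 < N₂)
    (Mx My F : (Fin d → ℝ) → ℝ)
    (hMx : Mx = fun μ => (Xbar - μ) ⬝ᵥ (S₁⁻¹ *ᵥ (Xbar - μ)))
    (hMy : My = fun μ => (Ybar - μ) ⬝ᵥ (S₂⁻¹ *ᵥ (Ybar - μ)))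
    (hF : F = fun μ => (N₁/2) * Real.log (1 + Mx μ) + (N₂/2) * Real.log (1 + My μ))
    (μstar : Fin d → ℝ) (hmin : ∀ μ : Fin d → ℝ, F μstar ≤ F μ) :
    (Mx μstar ≤ Mx Ybar ∧ My μstar ≤ My Xbar) ∧
    (1 ≤ 1 + Mx μstar ∧ 1 + Mx μstar ≤ 1 + Mx Ybar) ∧
    (1 ≤ 1 + My μstar ∧ 1 + My μstar ≤ 1 + My Xbar) :=
  stmt6_general d S₁ S₂ hS₁ hS₂ Xbar Ybar N₁ N₂ hN₁ hN₂ Mx My F hMx hMy hF μstar hmin
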